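/- arXiv:math/9811064 — 2 statements merged into one kernel-verified Lean document; each statement's English description precedes it below -/
import Mathlib

section
/- Fix h, α, z1, z2 : ℝ. For q : ℝ with q > 0 and q ≠ 1, define the 2×2 real matrix M(q) := ![![1, h/(q−1)], ![0,1]] and the 4×4 diagonal real matrix F(q) with diagonal entries, in the lexicographic basis of Fin 2 × Fin 2, equal to (q^{−(α/2)(z2−z1)}, q^{−(α/2)(z2+z1)}, q^{(α/2)(z2+z1)}, q^{(α/2)(z2−z1)}). Then, as q tends to 1 within {q : ℝ | 0 < q ∧ q ≠ 1}, the matrix (M(q)⁻¹ ⊗ₖ M(q)⁻¹) * F(q) * (M(q) ⊗ₖ M(q)) tends to the Kronecker product ![![1, −α z2 h], ![0,1]] ⊗ₖ ![![1, α z1 h], ![0,1]]. -/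
open Matrix Filter
open scoped Kronecker

/-- The fundamental representation of the contraction matrix `M = E_q(ηJ₊)`, `η = h/(q−1)`. -/
noncomputable def Mmat (h q : ℝ) : Matrix (Fin 2) (Fin 2) ℝ := !![1, h / (q - 1); 0, 1]

/-- The inverse `F̂_λ⁻¹` (with `λ = q^α`) of the Reshetikhin twist of `U_{q,λ}(gl(2))` in the
coloured fundamental ⊗ fundamental representation: the diagonal matrix with entries
`(q^{−(α/2)(z2−z1)}, q^{−(α/2)(z2+z1)}, q^{(α/2)(z2+z1)}, q^{(α/2)(z2−z1)})` in the
lexicographic basis of `Fin 2 × Fin 2`. -/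
noncomputable def Fq (α z1 z2 q : ℝ) : Matrix (Fin 2 × Fin 2) (Fin 2 × Fin 2) ℝ :=
  Matrix.diagonal fun p =>
    q ^ (!![-(α / 2) * (z2 - z1), -(α / 2) * (z2 + z1);
            (α / 2) * (z2 + z1), (α / 2) * (z2 - z1)] p.1 p.2)

lemma slope_key (c : ℝ) :
    Tendsto (fun q : ℝ => (q ^ c - 1) / (q - 1))
      (nhdsWithin 1 {q : ℝ | 0 < q ∧ q ≠ 1}) (nhds c) := by
  have h1 : HasDerivAt (fun x : ℝ => x ^ c) (c * (1:ℝ) ^ (c - 1)) 1 :=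
    Real.hasDerivAt_rpow_const (Or.inl one_ne_zero)
  rw [hasDerivAt_iff_tendsto_slope] at h1
  have h2 := h1.mono_left (nhdsWithin_mono (s := {q : ℝ | 0 < q ∧ q ≠ 1}) _ (fun q (hq : 0 < q ∧ q ≠ 1) => hq.2))
  simpa [slope_fun_def_field, Real.one_rpow] using h2

lemma rpow_lim (c : ℝ) :
    Tendsto (fun q : ℝ => q ^ c)
      (nhdsWithin 1 {q : ℝ | 0 < q ∧ q ≠ 1}) (nhds 1) := by
  have := (Real.continuousAt_rpow_const 1 c (Or.inl one_ne_zero)).tendsto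
  rw [Real.one_rpow] at this
  exact this.mono_left nhdsWithin_le_nhds

lemma entry_lim (h c d : ℝ) :
    Tendsto (fun q : ℝ => h / (q - 1) * (q ^ c - q ^ d))
      (nhdsWithin 1 {q : ℝ | 0 < q ∧ q ≠ 1}) (nhds (h * (c - d))) := by
  have := ((slope_key c).sub (slope_key d)).const_mul h
  exact this.congr (fun q => by ring)

noncomputable def Gmat (h c d q : ℝ) : Matrix (Fin 2) (Fin 2) ℝ :=
  !![q ^ c, h / (q - 1) * (q ^ c - q ^ d); 0, q ^ d]

lemma G_lim (h c d : ℝ) :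
    Tendsto (fun q : ℝ => Gmat h c d q)
      (nhdsWithin 1 {q : ℝ | 0 < q ∧ q ≠ 1}) (nhds !![1, h * (c - d); 0, 1]) := by
  refine tendsto_pi_nhds.2 ?_
  intro i
  rw [tendsto_pi_nhds]
  intro j
  fin_cases i <;> fin_cases j <;>
    simp [Gmat] <;>
    first
      | exact rpow_lim c
      | exact rpow_lim d
      | exact entry_lim h c d
      | exact tendsto_const_nhds

lemma Minv (h q : ℝ) : (Mmat h q)⁻¹ = !![1, -(h / (q - 1)); 0, 1] := by
  apply Matrix.inv_eq_right_inv
  rw [Mmat, Matrix.mul_fin_two, Matrix.one_fin_two]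
  norm_num

lemma Fq_eq (α z1 z2 q : ℝ) (hq : 0 < q) :
    Fq α z1 z2 q =
      !![q ^ (-(α / 2) * z2), 0; 0, q ^ ((α / 2) * z2)] ⊗ₖ
      !![q ^ ((α / 2) * z1), 0; 0, q ^ (-(α / 2) * z1)] := by
  ext ⟨i, k⟩ ⟨j, l⟩
  fin_cases i <;> fin_cases k <;> fin_cases j <;> fin_cases l <;>
    simp [Fq, Matrix.diagonal, ← Real.rpow_add hq] <;> ring_nf <;>
    exact fun hcon => absurd hcon (by decide)

lemma conj_eq (h c d q : ℝ) :
    (Mmat h q)⁻¹ * !![q ^ c, 0; 0, q ^ d] * Mmat h q = Gmat h c d q := by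
  rw [Minv, Mmat, Gmat, Matrix.mul_fin_two, Matrix.mul_fin_two]
  ext i j
  fin_cases i <;> fin_cases j <;> simp <;> ring

/-- The paper's contraction identity `F_α⁻¹ = lim_{q→1} (M⁻¹⊗M⁻¹) F̂_λ⁻¹ (M⊗M)`, in the
coloured fundamental representation, where
`F_α⁻¹ = T̃^{−αz2} ⊗ T̃^{αz1}` with `T̃ = exp(hX) = !![1, h; 0, 1]`. -/
theorem contraction_twist_Falpha (h α z1 z2 : ℝ) :
    Tendsto
      (fun q : ℝ =>
        ((Mmat h q)⁻¹ ⊗ₖ (Mmat h q)⁻¹) * Fq α z1 z2 q * (Mmat h q ⊗ₖ Mmat h q))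
      (nhdsWithin 1 {q : ℝ | 0 < q ∧ q ≠ 1})
      (nhds (!![1, -(α * z2 * h); 0, 1] ⊗ₖ !![1, α * z1 * h; 0, 1])) := by
  have t1 := G_lim h (-(α / 2) * z2) ((α / 2) * z2)
  have t2 := G_lim h ((α / 2) * z1) (-(α / 2) * z1)
  rw [show h * (-(α / 2) * z2 - (α / 2) * z2) = -(α * z2 * h) by ring] at t1
  rw [show h * ((α / 2) * z1 - -(α / 2) * z1) = α * z1 * h by ring] at t2
  have key : Tendsto
      (fun q : ℝ => Gmat h (-(α / 2) * z2) ((α / 2) * z2) q ⊗ₖ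
        Gmat h ((α / 2) * z1) (-(α / 2) * z1) q)
      (nhdsWithin 1 {q : ℝ | 0 < q ∧ q ≠ 1})
      (nhds (!![1, -(α * z2 * h); 0, 1] ⊗ₖ !![1, α * z1 * h; 0, 1])) := by
    refine tendsto_pi_nhds.2 ?_
    rintro ⟨i, k⟩
    rw [tendsto_pi_nhds]
    rintro ⟨j, l⟩
    simp only [Matrix.kroneckerMap_apply]
    exact (tendsto_pi_nhds.1 (tendsto_pi_nhds.1 t1 i) j).mul
      (tendsto_pi_nhds.1 (tendsto_pi_nhds.1 t2 k) l)
  refine key.congr' ?_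
  filter_upwards [self_mem_nhdsWithin] with q hq
  obtain ⟨hq0, -⟩ := hq
  rw [Fq_eq α z1 z2 q hq0, ← conj_eq h (-(α / 2) * z2) ((α / 2) * z2) q,
    ← conj_eq h ((α / 2) * z1) (-(α / 2) * z1) q,
    ← Matrix.mul_kronecker_mul, ← Matrix.mul_kronecker_mul]
end

section
/- Let h : ℝ and let R := ![![1, h, −h, h^2], ![0, 1, 0, h], ![0, 0, 1, −h], ![0, 0, 0, 1]] be the 4×4 real matrix indexed lexicographically by Fin 2 × Fin 2, and let P be the 4×4 flip matrix with P_{(i,j),(k,l)} = 1 iff i = l and j = k. Set R12 := R ⊗ₖ (1 : Matrix (Fin 2) (Fin 2) ℝ), R23 := (1 : Matrix (Fin 2) (Fin 2) ℝ) ⊗ₖ R, and R13 := (1 ⊗ₖ P) * R12 * (1 ⊗ₖ P) (8×8 matrices, Kronecker products). Then: (i) R12 * R13 * R23 = R23 * R13 * R12 (the quantum Yang–Baxter equation); and (ii) R * (P * R * P) = 1, i.e. R21 := PRP equals R⁻¹ (triangularity). -/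
set_option linter.unnecessarySeqFocus false


open Matrix
open scoped Kronecker

/-- Lexicographic identification of `Fin 2 × Fin 2` with `Fin 4`. -/
def lex22 (p : Fin 2 × Fin 2) : Fin 4 :=
  ⟨2 * p.1.val + p.2.val, by have := p.1.isLt; have := p.2.isLt; omega⟩

/-- The fundamental representation of the Jordanian universal R-matrix `𝓡_h`. -/
noncomputable def Rh (h : ℝ) : Matrix (Fin 2 × Fin 2) (Fin 2 × Fin 2) ℝ :=
  Matrix.of fun p r =>
    !![1, h, -h, h ^ 2; 0, 1, 0, h; 0, 0, 1, -h; 0, 0, 0, 1] (lex22 p) (lex22 r)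

/-- The flip (permutation) matrix `P` with `P_{(i,j),(k,l)} = 1` iff `i = l` and `j = k`. -/
def Pflip : Matrix (Fin 2 × Fin 2) (Fin 2 × Fin 2) ℝ :=
  Matrix.of fun p r => if p.1 = r.2 ∧ p.2 = r.1 then 1 else 0

/-- `R₁₂ = R ⊗ 1` acting on the first two factors of the triple tensor product. -/
noncomputable def R12 (h : ℝ) : Matrix (Fin 2 × Fin 2 × Fin 2) (Fin 2 × Fin 2 × Fin 2) ℝ :=
  Matrix.reindex (Equiv.prodAssoc (Fin 2) (Fin 2) (Fin 2))
    (Equiv.prodAssoc (Fin 2) (Fin 2) (Fin 2)) (Rh h ⊗ₖ (1 : Matrix (Fin 2) (Fin 2) ℝ))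

/-- `R₂₃ = 1 ⊗ R` acting on the last two factors of the triple tensor product. -/
noncomputable def R23 (h : ℝ) : Matrix (Fin 2 × Fin 2 × Fin 2) (Fin 2 × Fin 2 × Fin 2) ℝ :=
  (1 : Matrix (Fin 2) (Fin 2) ℝ) ⊗ₖ Rh h

/-- `R₁₃ = (1 ⊗ P) R₁₂ (1 ⊗ P)` acting on the first and third factors. -/
noncomputable def R13 (h : ℝ) : Matrix (Fin 2 × Fin 2 × Fin 2) (Fin 2 × Fin 2 × Fin 2) ℝ :=
  ((1 : Matrix (Fin 2) (Fin 2) ℝ) ⊗ₖ Pflip) * R12 h * ((1 : Matrix (Fin 2) (Fin 2) ℝ) ⊗ₖ Pflip)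


set_option maxHeartbeats 1000000

/-- A pattern-matching version of `Rh` that reduces quickly. -/
noncomputable def Rh' (h : ℝ) : Matrix (Fin 2 × Fin 2) (Fin 2 × Fin 2) ℝ :=
  fun p r =>
    match p, r with
    | (0,0), (0,0) => 1 | (0,0), (0,1) => h | (0,0), (1,0) => -h | (0,0), (1,1) => h ^ 2
    | (0,1), (0,0) => 0 | (0,1), (0,1) => 1 | (0,1), (1,0) => 0  | (0,1), (1,1) => h
    | (1,0), (0,0) => 0 | (1,0), (0,1) => 0 | (1,0), (1,0) => 1  | (1,0), (1,1) => -h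
    | (1,1), (0,0) => 0 | (1,1), (0,1) => 0 | (1,1), (1,0) => 0  | (1,1), (1,1) => 1

lemma Rh_eq (h : ℝ) : Rh h = Rh' h := by
  ext ⟨i, j⟩ ⟨a, b⟩
  fin_cases i <;> fin_cases j <;> fin_cases a <;> fin_cases b <;> rfl

lemma Pflip_apply (p r : Fin 2 × Fin 2) :
    Pflip p r = if p.1 = r.2 ∧ p.2 = r.1 then 1 else 0 := rfl

lemma R12_eq (h : ℝ) : R12 h = fun p r =>
    Rh' h (p.1, p.2.1) (r.1, r.2.1) * (if p.2.2 = r.2.2 then 1 else 0) := by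
  ext ⟨i, j, k⟩ ⟨a, b, c⟩
  simp [R12, Rh_eq, Matrix.one_apply]

lemma R23_eq (h : ℝ) : R23 h = fun p r =>
    (if p.1 = r.1 then 1 else 0) * Rh' h p.2 r.2 := by
  ext ⟨i, j, k⟩ ⟨a, b, c⟩
  simp [R23, Rh_eq, Matrix.one_apply]

lemma R13_eq (h : ℝ) : R13 h = fun p r =>
    Rh' h (p.1, p.2.2) (r.1, r.2.2) * (if p.2.1 = r.2.1 then 1 else 0) := by
  ext ⟨i, j, k⟩ ⟨a, b, c⟩
  simp only [R13, Matrix.mul_apply]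
  simp only [R12_eq, Matrix.mul_apply, Fintype.sum_prod_type, Fin.sum_univ_two,
    Matrix.kroneckerMap_apply, Matrix.one_apply, Pflip_apply]
  fin_cases i <;> fin_cases j <;> fin_cases k <;> fin_cases a <;> fin_cases b <;> fin_cases c <;>
    norm_num [Rh']

/-- The Jordanian fundamental R-matrix satisfies the quantum Yang–Baxter equation and the
triangularity condition `R₂₁ = PRP = R⁻¹`. -/
theorem Rh_yang_baxter_and_triangular (h : ℝ) :
    R12 h * R13 h * R23 h = R23 h * R13 h * R12 h ∧
    Rh h * (Pflip * Rh h * Pflip) = 1 := by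
  constructor
  · ext ⟨i, j, k⟩ ⟨a, b, c⟩
    simp only [Matrix.mul_apply]
    simp only [R12_eq, R13_eq, R23_eq, Matrix.mul_apply, Fintype.sum_prod_type,
      Fin.sum_univ_two]
    fin_cases i <;> fin_cases j <;> fin_cases k <;> fin_cases a <;> fin_cases b <;> fin_cases c <;>
      norm_num [Rh', Prod.ext_iff, Fin.ext_iff] <;> ring
  · ext ⟨i, j⟩ ⟨a, b⟩
    simp only [Rh_eq, Matrix.mul_apply, Fintype.sum_prod_type, Fin.sum_univ_two,
      Matrix.one_apply, Pflip_apply]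
    fin_cases i <;> fin_cases j <;> fin_cases a <;> fin_cases b <;>
      norm_num [Rh', Prod.ext_iff, Fin.ext_iff] <;> ring
end
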